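/- arXiv:2307.07746 — 5 statements merged into one kernel-verified Lean document; each statement's English description precedes it below -/
import Mathlib

section
/- Let r_ℓ : [0,∞) → ℝ, ℓ = 2,...,K, be a C¹ solution of ṙ_ℓ(t) = r_ℓ(t)(μ_{ℓ-1} - μ_ℓ - μ_{ℓ-1}r_ℓ(t) + μ_ℓ r_{ℓ+1}(t)) with r_{K+1} ≡ 0 and r_ℓ(t) ≥ 0 for all t. If ṙ_ℓ(0) ≤ 0 for all ℓ, then ṙ_ℓ(t) ≤ 0 for all t ≥ 0 and all ℓ = 2,...,K. -/
open Set Real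

/-- Scalar comparison lemma: if `f` is differentiable, `f' t ≤ h t * f t` for `t ≥ 0`
with `h` continuous, and `f 0 ≤ 0`, then `f t ≤ 0` for all `t ≥ 0`. -/
lemma nonpos_of_deriv_le_mul (f h : ℝ → ℝ) (hf : Differentiable ℝ f)
    (hh : Continuous h)
    (hineq : ∀ t, 0 ≤ t → deriv f t ≤ h t * f t) (h0 : f 0 ≤ 0) :
    ∀ t, 0 ≤ t → f t ≤ 0 := by
  intro t₀ ht₀
  by_contra hpos
  push_neg at hpos
  set S : Set ℝ := {t | t ∈ Icc 0 t₀ ∧ f t ≤ 0} with hS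
  have hSne : S.Nonempty := ⟨0, ⟨⟨le_refl 0, ht₀⟩, h0⟩⟩
  have hSbdd : BddAbove S := ⟨t₀, fun x hx => hx.1.2⟩
  have hSclosed : IsClosed S := by
    have : S = Icc 0 t₀ ∩ f ⁻¹' (Iic 0) := by
      ext x
      exact Iff.rfl
    rw [this]
    exact isClosed_Icc.inter (IsClosed.preimage hf.continuous isClosed_Iic)
  have hsmem : sSup S ∈ S := hSclosed.csSup_mem hSne hSbdd
  set s := sSup S with hsdef
  have hs0 : 0 ≤ s := hsmem.1.1
  have hst : s ≤ t₀ := hsmem.1.2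
  have hfs : f s ≤ 0 := hsmem.2
  have hslt : s < t₀ := by
    rcases lt_or_eq_of_le hst with h | h
    · exact h
    · exfalso; rw [h] at hfs; linarith
  -- on (s, t₀], f > 0
  have hfpos : ∀ x, s < x → x ≤ t₀ → 0 < f x := by
    intro x hx1 hx2
    by_contra hc
    push_neg at hc
    have : x ∈ S := ⟨⟨le_trans hs0 hx1.le, hx2⟩, hc⟩
    exact absurd (le_csSup hSbdd this) (not_le.mpr hx1)
  -- f s ≥ 0 by right continuity
  have hfs0 : f s = 0 := by
    have hge : 0 ≤ f s := by
      refine ge_of_tendsto (x := nhdsWithin s (Ioi s)) ((hf.continuous.continuousAt (x := s)).tendsto.mono_left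
        nhdsWithin_le_nhds) ?_
      filter_upwards [Ioo_mem_nhdsGT_of_mem (left_mem_Ico.mpr hslt)] with x hx
      exact (hfpos x hx.1 hx.2.le).le
    linarith
  -- bound on h over [s, t₀]
  obtain ⟨C, hC⟩ := (isCompact_Icc (a := s) (b := t₀)).exists_bound_of_continuousOn
    hh.continuousOn
  have key := le_gronwallBound_of_liminf_deriv_right_le (f := f) (f' := deriv f)
    (δ := 0) (K := C) (ε := 0) (a := s) (b := t₀)
    hf.continuous.continuousOn
    (fun x hx r hr =>
      ((hf x).hasDerivAt.hasDerivWithinAt (s := Ici x)).liminf_right_slope_le hr)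
    (le_of_eq hfs0)
    (by
      intro x hx
      have hx0 : 0 ≤ x := le_trans hs0 hx.1
      have hfx : 0 ≤ f x := by
        rcases eq_or_lt_of_le hx.1 with h | h
        · rw [← h, hfs0]
        · exact (hfpos x h hx.2.le).le
      have hhx : h x ≤ C := le_trans (le_abs_self _)
        (hC x ⟨hx.1, hx.2.le⟩)
      have := hineq x hx0
      nlinarith)
  have := key t₀ ⟨hst, le_refl t₀⟩
  rw [gronwallBound_ε0_δ0] at this
  linarith

/-- Let `r_ℓ : [0,∞) → ℝ`, `ℓ = 2,...,K`, be a nonnegative `C¹` solution of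
`ṙ_ℓ = r_ℓ(μ_{ℓ-1} - μ_ℓ - μ_{ℓ-1} r_ℓ + μ_ℓ r_{ℓ+1})` with `r_{K+1} ≡ 0`. If
`ṙ_ℓ(0) ≤ 0` for all `ℓ`, then `ṙ_ℓ(t) ≤ 0` for all `t ≥ 0` and all `ℓ = 2,...,K`. -/
theorem derivative_nonpos_forever (K : ℕ) (hK : 2 ≤ K) (μ : ℕ → ℝ)
    (hμnn : ∀ ℓ, 0 ≤ μ ℓ) (r : ℕ → ℝ → ℝ)
    (hC1 : ∀ ℓ, 2 ≤ ℓ → ℓ ≤ K → ContDiff ℝ 1 (r ℓ))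
    (hrK1 : ∀ t : ℝ, r (K + 1) t = 0)
    (hrnn : ∀ ℓ, 2 ≤ ℓ → ℓ ≤ K → ∀ t : ℝ, 0 ≤ t → 0 ≤ r ℓ t)
    (hode : ∀ ℓ, 2 ≤ ℓ → ℓ ≤ K → ∀ t : ℝ, 0 ≤ t →
      deriv (r ℓ) t = r ℓ t * (μ (ℓ - 1) - μ ℓ - μ (ℓ - 1) * r ℓ t + μ ℓ * r (ℓ + 1) t))
    (hinit : ∀ ℓ, 2 ≤ ℓ → ℓ ≤ K → deriv (r ℓ) 0 ≤ 0) :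
    ∀ ℓ, 2 ≤ ℓ → ℓ ≤ K → ∀ t : ℝ, 0 ≤ t → deriv (r ℓ) t ≤ 0 := by
  have hzero : r (K + 1) = fun _ => (0 : ℝ) := funext hrK1
  have main : ∀ n : ℕ, ∀ ℓ, 2 ≤ ℓ → ℓ ≤ K → K - ℓ < n →
      ∀ t : ℝ, 0 ≤ t → deriv (r ℓ) t ≤ 0 := by
    intro n
    induction n with
    | zero => intro ℓ _ _ h; omega
    | succ n ih =>
      intro ℓ h2 hlK hlt
      set u := r ℓ with hu
      set v := r (ℓ + 1) with hv
      set a := μ (ℓ - 1) with ha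
      set b := μ ℓ with hb
      have huC1 : ContDiff ℝ 1 u := hC1 ℓ h2 hlK
      have hud : Differentiable ℝ u := huC1.differentiable one_ne_zero
      -- properties of v
      have hvprop : ContDiff ℝ 1 v ∧ (∀ t, 0 ≤ t → deriv v t ≤ 0) := by
        rcases eq_or_lt_of_le hlK with hEq | hLt
        · rw [hv, hEq, hzero]
          exact ⟨contDiff_const, fun t _ => by simp⟩
        · refine ⟨hC1 (ℓ + 1) (by omega) hLt, fun t ht => ih (ℓ + 1) (by omega) hLt (by omega) t ht⟩
      obtain ⟨hvC1, hvd0⟩ := hvprop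
      have hvd : Differentiable ℝ v := hvC1.differentiable one_ne_zero
      set F : ℝ → ℝ := fun t => u t * (a - b - a * u t + b * v t) with hF
      have hFderiv : ∀ t, HasDerivAt F
          (deriv u t * (a - b - a * u t + b * v t)
            + u t * (-(a * deriv u t) + b * deriv v t)) t := by
        intro t
        have hut := (hud t).hasDerivAt
        have hvt := (hvd t).hasDerivAt
        have hg : HasDerivAt (fun t => a - b - a * u t + b * v t)
            (-(a * deriv u t) + b * deriv v t) t := by
          have := ((hasDerivAt_const t (a - b)).sub (hut.const_mul a)).add (hvt.const_mul b)
          refine this.congr_deriv ?_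
          ring
        exact hut.mul hg
      have hFd : Differentiable ℝ F := fun t => (hFderiv t).differentiableAt
      set h : ℝ → ℝ := fun t => (a - b - a * u t + b * v t) - a * u t with hh
      have hhc : Continuous h := by
        have hcu := huC1.continuous
        have hcv := hvC1.continuous
        fun_prop
      have hFode : ∀ t, 0 ≤ t → deriv u t = F t := fun t ht => hode ℓ h2 hlK t ht
      have hineq : ∀ t, 0 ≤ t → deriv F t ≤ h t * F t := by
        intro t ht
        rw [(hFderiv t).deriv, hFode t ht]
        have hht : h t = (a - b - a * u t + b * v t) - a * u t := rfl
        rw [hht]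
        have h1 : u t * (b * deriv v t) ≤ 0 :=
          mul_nonpos_of_nonneg_of_nonpos (hrnn ℓ h2 hlK t ht)
            (mul_nonpos_of_nonneg_of_nonpos (hμnn ℓ) (hvd0 t ht))
        nlinarith [h1]
      have hF0 : F 0 ≤ 0 := by
        rw [← hFode 0 le_rfl]
        exact hinit ℓ h2 hlK
      have hFle := nonpos_of_deriv_le_mul F h hFd hhc hineq hF0
      intro t ht
      rw [hFode t ht]
      exact hFle t ht
  intro ℓ h2 hlK t ht
  exact main (K - ℓ + 1) ℓ h2 hlK (by omega) t ht
end

section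
/- For the FCFS greedy priority assignment, the optimal values μ*_j satisfy the recursion μ*_1 = μ_1 and μ*_j = μ*_{j-1} + min{μ_j - μ*_{j-1}, μ*_{j-1} - μ*_{j-2}}, the service rate of agent j is q*_j = μ*_j - μ*_{j-1}, and q*_j is nonincreasing in j. -/
/-- For the FCFS greedy priority assignment, the values `μ*_j` defined by
`μ*_0 = 0`, `μ*_1 = μ_1`, `μ*_j = μ*_{j-1} + min{μ_j - μ*_{j-1}, μ*_{j-1} - μ*_{j-2}}`
have nonnegative, nonincreasing increments `q*_j = μ*_j - μ*_{j-1}`, and satisfy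
`μ*_j ≤ μ_j` for all `j`. -/
theorem fcfs_greedy_rates (μ μs : ℕ → ℝ) (hμ0 : μ 0 = 0) (hmono : Monotone μ)
    (hs0 : μs 0 = 0) (hs1 : μs 1 = μ 1)
    (hsrec : ∀ j, 2 ≤ j →
      μs j = μs (j - 1) + min (μ j - μs (j - 1)) (μs (j - 1) - μs (j - 2))) :
    (∀ j, 1 ≤ j → 0 ≤ μs j - μs (j - 1)) ∧
    (∀ j, 1 ≤ j → μs (j + 1) - μs j ≤ μs j - μs (j - 1)) ∧
    (∀ j, μs j ≤ μ j) := by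
  have key : ∀ j, 1 ≤ j → 0 ≤ μs j - μs (j - 1) ∧ μs j ≤ μ j := by
    intro j hj
    induction j, hj using Nat.le_induction with
    | base =>
      simp only [Nat.sub_self, hs0, hs1, sub_zero]
      have h1 : 0 ≤ μ 1 := hμ0 ▸ hmono (Nat.zero_le 1)
      exact ⟨h1, le_refl _⟩
    | succ n hn ih =>
      have hrec := hsrec (n + 1) (by omega)
      have h1 : n + 1 - 1 = n := by omega
      have h2 : n + 1 - 2 = n - 1 := by omega
      rw [h1, h2] at hrec
      have hμle : μs n ≤ μ n := ih.2
      have hmm : μ n ≤ μ (n + 1) := hmono (Nat.le_succ n)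
      constructor
      · rw [h1, hrec]
        have : 0 ≤ min (μ (n + 1) - μs n) (μs n - μs (n - 1)) :=
          le_min (by linarith) ih.1
        linarith
      · rw [hrec]
        have : min (μ (n + 1) - μs n) (μs n - μs (n - 1)) ≤ μ (n + 1) - μs n :=
          min_le_left _ _
        linarith
  refine ⟨fun j hj => (key j hj).1, ?_, ?_⟩
  · intro j hj
    have hrec := hsrec (j + 1) (by omega)
    have h1 : j + 1 - 1 = j := by omega
    have h2 : j + 1 - 2 = j - 1 := by omega
    rw [h1, h2] at hrec
    have : min (μ (j + 1) - μs j) (μs j - μs (j - 1)) ≤ μs j - μs (j - 1) :=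
      min_le_right _ _
    linarith
  · intro j
    match j with
    | 0 => rw [hs0, hμ0]
    | (n + 1) => exact (key (n + 1) (by omega)).2
end

section
/- FCFS is work-conserving if and only if μ is regular: for the greedy values μ*_k defined by μ*_1 = μ_1 and μ*_k = μ*_{k-1} + min{μ_k - μ*_{k-1}, μ*_{k-1} - μ*_{k-2}}, one has μ*_k = μ_k for all k if and only if μ_k - μ_{k-1} is nonincreasing in k. -/
/-- FCFS is work-conserving iff `μ` is regular: for the greedy values
`μ*` defined by `μ*_0 = 0`, `μ*_1 = μ_1`,
`μ*_k = μ*_{k-1} + min{μ_k - μ*_{k-1}, μ*_{k-1} - μ*_{k-2}}`, one has `μ*_k = μ_k`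
for all `k` iff `μ_k - μ_{k-1}` is nonincreasing in `k`. -/
theorem fcfs_work_conserving_iff_regular (μ μs : ℕ → ℝ)
    (hμ0 : μ 0 = 0) (hmono : Monotone μ)
    (hs0 : μs 0 = 0) (hs1 : μs 1 = μ 1)
    (hsrec : ∀ k, 2 ≤ k →
      μs k = μs (k - 1) + min (μ k - μs (k - 1)) (μs (k - 1) - μs (k - 2))) :
    (∀ k, μs k = μ k) ↔ (∀ k, 1 ≤ k → μ (k + 1) - μ k ≤ μ k - μ (k - 1)) := by
  constructor
  · intro h k hk
    have hr := hsrec (k + 1) (by omega)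
    have e1 : k + 1 - 1 = k := by omega
    have e2 : k + 1 - 2 = k - 1 := by omega
    rw [e1, e2, h (k + 1), h k, h (k - 1)] at hr
    have hm : min (μ (k + 1) - μ k) (μ k - μ (k - 1)) = μ (k + 1) - μ k := by linarith
    exact min_eq_left_iff.mp hm
  · intro h k
    induction k using Nat.strong_induction_on with
    | _ k ih =>
      match k with
      | 0 => rw [hs0, hμ0]
      | 1 => exact hs1
      | (k + 2) =>
        have hr := hsrec (k + 2) (by omega)
        have e1 : k + 2 - 1 = k + 1 := by omega
        have e2 : k + 2 - 2 = k := by omega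
        rw [e1, e2, ih (k + 1) (by omega), ih k (by omega)] at hr
        have hc := h (k + 1) (by omega)
        have e3 : k + 1 - 1 = k := by omega
        rw [e3] at hc
        rw [min_eq_left (by linarith)] at hr
        linarith
end

section
/- If μ is regular, then the function ψ(K) = ∑_{k=1}^K ∏_{ℓ=1}^k (λ_{ℓ-1}/μ_ℓ) · [μ_k V - Ck] is single-peaked in K. -/
-- d' i = f (i+1) - f i is antitone
lemma diff_antitone (f : ℕ → ℝ)
    (hd : ∀ k, 1 ≤ k → f (k + 1) - f k ≤ f k - f (k - 1)) :
    ∀ i j : ℕ, i ≤ j → f (j + 1) - f j ≤ f (i + 1) - f i := by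
  intro i j hij
  induction j with
  | zero => simp_all
  | succ n ih =>
    rcases Nat.lt_or_ge i (n+1) with h | h
    · have := hd (n+1) (by omega)
      simp only [Nat.add_sub_cancel] at this
      exact this.trans (ih (by omega))
    · have : i = n + 1 := by omega
      simp [this]

lemma concave_step (f : ℕ → ℝ) (h0 : f 0 = 0)
    (hd : ∀ k, 1 ≤ k → f (k + 1) - f k ≤ f k - f (k - 1)) (K : ℕ) (hK : 1 ≤ K) :
    (0 ≤ f (K + 1) → 0 ≤ f K) ∧ (0 < f (K + 1) → 0 < f K) := by
  have htel : f K = ∑ i ∈ Finset.range K, (f (i + 1) - f i) := by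
    rw [Finset.sum_range_sub, h0, sub_zero]
  have hlow : (K : ℝ) * (f (K + 1) - f K) ≤ f K := by
    calc (K : ℝ) * (f (K + 1) - f K)
        = ∑ _i ∈ Finset.range K, (f (K + 1) - f K) := by
          rw [Finset.sum_const, Finset.card_range, nsmul_eq_mul]
      _ ≤ ∑ i ∈ Finset.range K, (f (i + 1) - f i) := by
          apply Finset.sum_le_sum
          intro i hi
          exact diff_antitone f hd i K (Nat.le_of_lt (Finset.mem_range.mp hi))
      _ = f K := htel.symm
  constructor
  · intro h
    by_contra hneg
    push_neg at hneg
    have h1 : 0 < f (K + 1) - f K := by linarith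
    have : 0 < (K : ℝ) * (f (K + 1) - f K) := by
      apply mul_pos (by exact_mod_cast hK) h1
    linarith
  · intro h
    by_contra hneg
    push_neg at hneg
    have h1 : 0 < f (K + 1) - f K := by linarith
    have : 0 < (K : ℝ) * (f (K + 1) - f K) := by
      apply mul_pos (by exact_mod_cast hK) h1
    linarith

lemma concave_down (f : ℕ → ℝ) (h0 : f 0 = 0)
    (hd : ∀ k, 1 ≤ k → f (k + 1) - f k ≤ f k - f (k - 1)) :
    ∀ n (K' : ℕ), 1 ≤ K' →
      (0 ≤ f (K' + n) → 0 ≤ f K') ∧ (0 < f (K' + n) → 0 < f K') := by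
  intro n
  induction n with
  | zero => intro K' _; simp
  | succ m ih =>
    intro K' hK'
    have step := concave_step f h0 hd (K' + m) (by omega)
    have ihm := ih K' hK'
    constructor
    · intro h; exact ihm.1 (step.1 h)
    · intro h; exact ihm.2 (step.2 h)

/-- If `μ` is regular, the function
`ψ(K) = ∑_{k=1}^K ∏_{ℓ=1}^k (λ_{ℓ-1}/μ_ℓ) [μ_k V - Ck]` is single-peaked in `K`:
if `ψ(K-1) ≤ ψ(K)` (resp. `<`) then `ψ(K'-1) ≤ ψ(K')` (resp. `<`) for all
`1 ≤ K' ≤ K`. -/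
theorem psi_single_peaked (μ lam : ℕ → ℝ) (V C : ℝ)
    (hμ0 : μ 0 = 0) (hμpos : ∀ k, 1 ≤ k → 0 < μ k)
    (hreg : ∀ k, 1 ≤ k → μ (k + 1) - μ k ≤ μ k - μ (k - 1))
    (hlam : ∀ k, 0 < lam k) (hV : 0 < V) (hC : 0 < C) :
    ∀ K : ℕ, 1 ≤ K →
      (((∑ k ∈ Finset.Icc 1 (K - 1), (∏ ℓ ∈ Finset.Icc 1 k, lam (ℓ - 1) / μ ℓ) *
            (μ k * V - C * k)) ≤
          ∑ k ∈ Finset.Icc 1 K, (∏ ℓ ∈ Finset.Icc 1 k, lam (ℓ - 1) / μ ℓ) *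
            (μ k * V - C * k)) →
        ∀ K', 1 ≤ K' → K' ≤ K →
          (∑ k ∈ Finset.Icc 1 (K' - 1), (∏ ℓ ∈ Finset.Icc 1 k, lam (ℓ - 1) / μ ℓ) *
              (μ k * V - C * k)) ≤
            ∑ k ∈ Finset.Icc 1 K', (∏ ℓ ∈ Finset.Icc 1 k, lam (ℓ - 1) / μ ℓ) *
              (μ k * V - C * k)) ∧
      (((∑ k ∈ Finset.Icc 1 (K - 1), (∏ ℓ ∈ Finset.Icc 1 k, lam (ℓ - 1) / μ ℓ) *
            (μ k * V - C * k)) <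
          ∑ k ∈ Finset.Icc 1 K, (∏ ℓ ∈ Finset.Icc 1 k, lam (ℓ - 1) / μ ℓ) *
            (μ k * V - C * k)) →
        ∀ K', 1 ≤ K' → K' ≤ K →
          (∑ k ∈ Finset.Icc 1 (K' - 1), (∏ ℓ ∈ Finset.Icc 1 k, lam (ℓ - 1) / μ ℓ) *
              (μ k * V - C * k)) <
            ∑ k ∈ Finset.Icc 1 K', (∏ ℓ ∈ Finset.Icc 1 k, lam (ℓ - 1) / μ ℓ) *
              (μ k * V - C * k)) := by
  set f : ℕ → ℝ := fun k => μ k * V - C * k with hf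
  set g : ℕ → ℝ := fun k => (∏ ℓ ∈ Finset.Icc 1 k, lam (ℓ - 1) / μ ℓ) * (μ k * V - C * k)
    with hg
  have h0 : f 0 = 0 := by simp [hf, hμ0]
  have hd : ∀ k, 1 ≤ k → f (k + 1) - f k ≤ f k - f (k - 1) := by
    intro k hk
    have h1 : (μ (k + 1) - μ k) * V ≤ (μ k - μ (k - 1)) * V :=
      mul_le_mul_of_nonneg_right (hreg k hk) hV.le
    have hc : ((k - 1 : ℕ) : ℝ) = (k : ℝ) - 1 := by
      rw [Nat.cast_sub hk]; norm_num
    simp only [hf]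
    push_cast [hc]
    nlinarith [h1]
  have hpos : ∀ K : ℕ, 1 ≤ K → 0 < ∏ ℓ ∈ Finset.Icc 1 K, lam (ℓ - 1) / μ ℓ := by
    intro K _
    apply Finset.prod_pos
    intro ℓ hℓ
    exact div_pos (hlam _) (hμpos ℓ (Finset.mem_Icc.mp hℓ).1)
  have hsplit : ∀ K : ℕ, 1 ≤ K →
      ∑ k ∈ Finset.Icc 1 K, g k = (∑ k ∈ Finset.Icc 1 (K - 1), g k) + g K := by
    intro K hK
    obtain ⟨m, rfl⟩ : ∃ m, K = m + 1 := ⟨K - 1, by omega⟩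
    rw [Finset.sum_Icc_succ_top (by omega : 1 ≤ m + 1)]
    simp
  have hiff : ∀ K : ℕ, 1 ≤ K →
      ((∑ k ∈ Finset.Icc 1 (K - 1), g k ≤ ∑ k ∈ Finset.Icc 1 K, g k ↔ 0 ≤ f K) ∧
       (∑ k ∈ Finset.Icc 1 (K - 1), g k < ∑ k ∈ Finset.Icc 1 K, g k ↔ 0 < f K)) := by
    intro K hK
    rw [hsplit K hK]
    have hgK : g K = (∏ ℓ ∈ Finset.Icc 1 K, lam (ℓ - 1) / μ ℓ) * f K := rfl
    have hP := hpos K hK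
    constructor
    · rw [le_add_iff_nonneg_right, hgK]
      exact mul_nonneg_iff_of_pos_left hP
    · rw [lt_add_iff_pos_right, hgK]
      exact mul_pos_iff_of_pos_left hP
  intro K hK
  constructor
  · intro h K' hK' hKK'
    have hfK : 0 ≤ f K := ((hiff K hK).1).mp h
    have hfK' : 0 ≤ f K' := (concave_down f h0 hd (K - K') K' hK').1
      (by rwa [show K' + (K - K') = K by omega])
    exact ((hiff K' hK').1).mpr hfK'
  · intro h K' hK' hKK'
    have hfK : 0 < f K := ((hiff K hK).2).mp h
    have hfK' : 0 < f K' := (concave_down f h0 hd (K - K') K' hK').2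
      (by rwa [show K' + (K - K') = K by omega])
    exact ((hiff K' hK').2).mpr hfK'
end

section
/- The set M' = {p ∈ Δ(ℤ≥0) : ∑_k p_k(μ_k V - Ck) ≥ 0 and λ_k p_k ≥ μ_{k+1} p_{k+1} for all k} is compact in the weak topology (equivalently, tight and closed). -/
set_option maxHeartbeats 1000000

open Filter Topology Finset

/-- For any member of the constraint set, the first-moment series is summable
with sum bounded by `M*V`. -/
private lemma moment_bound (μ : ℕ → ℝ) (V C M : ℝ)
    (hμnn : ∀ k, 0 ≤ μ k) (hμb : ∀ k, μ k ≤ M) (hV : 0 < V)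
    (p : ℕ → ℝ) (hpnn : ∀ k, 0 ≤ p k) (hps : HasSum p 1)
    (hfs : Summable (fun k => p k * (μ k * V - C * k)))
    (hf0 : 0 ≤ ∑' k : ℕ, p k * (μ k * V - C * k)) :
    Summable (fun k => p k * (C * k)) ∧ (∑' k : ℕ, p k * (C * k)) ≤ M * V := by
  have hg : Summable (fun k => p k * (μ k * V)) := by
    apply Summable.of_nonneg_of_le
      (fun k => mul_nonneg (hpnn k) (mul_nonneg (hμnn k) hV.le))
      (fun k => ?_) (hps.summable.mul_left (M * V))
    nlinarith [mul_nonneg (mul_nonneg (hpnn k) (sub_nonneg.2 (hμb k))) hV.le]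
  have hkey : ∀ k, p k * (C * k)
      = p k * (μ k * V) - p k * (μ k * V - C * k) := fun k => by ring
  have hpck : Summable (fun k => p k * (C * k)) := by
    exact (hg.sub hfs).congr fun k => (hkey k).symm
  refine ⟨hpck, ?_⟩
  have h1 : (∑' k : ℕ, p k * (C * k))
      = (∑' k : ℕ, p k * (μ k * V)) - ∑' k : ℕ, p k * (μ k * V - C * k) := by
    rw [← Summable.tsum_sub hg hfs]; exact tsum_congr hkey
  have h2 : (∑' k : ℕ, p k * (μ k * V)) ≤ M * V := by
    calc (∑' k : ℕ, p k * (μ k * V)) ≤ ∑' k : ℕ, (M * V) * p k := by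
          apply Summable.tsum_le_tsum (fun k => ?_) hg (hps.summable.mul_left (M * V))
          nlinarith [mul_nonneg (mul_nonneg (hpnn k) (sub_nonneg.2 (hμb k))) hV.le]
      _ = (M * V) * ∑' k, p k := tsum_mul_left
      _ = M * V := by rw [hps.tsum_eq, mul_one]
  linarith

/-- Uniform tail bound from the first-moment bound. -/
private lemma tail_bound (C : ℝ) (hC : 0 < C) (p : ℕ → ℝ) (hpnn : ∀ k, 0 ≤ p k)
    (hpck : Summable (fun k => p k * (C * k))) (B : ℝ)
    (hB : ∑' k : ℕ, p k * (C * k) ≤ B) (N : ℕ) (hN : 1 ≤ N) :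
    (Summable fun k => p (k + N)) ∧ (∑' k : ℕ, p (k + N)) ≤ B / (C * N) := by
  have hCN : (0:ℝ) < C * N := by
    have : (1:ℝ) ≤ (N:ℝ) := by exact_mod_cast hN
    nlinarith
  have hshift : Summable (fun k => p (k + N) * (C * ((k + N : ℕ) : ℝ))) :=
    (summable_nat_add_iff N).2 hpck
  have hle : ∀ k, p (k + N) ≤ p (k + N) * (C * ((k + N : ℕ) : ℝ)) / (C * N) := by
    intro k
    rw [le_div_iff₀ hCN]
    have h1 : (N:ℝ) ≤ ((k + N : ℕ) : ℝ) := by exact_mod_cast Nat.le_add_left N k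
    nlinarith [mul_nonneg (mul_nonneg (hpnn (k + N)) hC.le) (sub_nonneg.2 h1)]
  have hsum : Summable (fun k => p (k + N)) :=
    Summable.of_nonneg_of_le (fun k => hpnn _) hle (hshift.div_const _)
  refine ⟨hsum, ?_⟩
  have htail : (∑' k : ℕ, p (k + N) * (C * ((k + N : ℕ) : ℝ))) ≤ B := by
    have h := Summable.sum_add_tsum_nat_add (f := fun k => p k * (C * k)) N hpck
    have hhead : (0:ℝ) ≤ ∑ i ∈ range N, p i * (C * i) :=
      Finset.sum_nonneg fun i _ => mul_nonneg (hpnn i) (by positivity)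
    linarith
  calc (∑' k : ℕ, p (k + N))
      ≤ ∑' k : ℕ, p (k + N) * (C * ((k + N : ℕ) : ℝ)) / (C * N) :=
        Summable.tsum_le_tsum hle hsum (hshift.div_const _)
    _ = (∑' k : ℕ, p (k + N) * (C * ((k + N : ℕ) : ℝ))) / (C * N) := tsum_div_const
    _ ≤ B / (C * N) := by gcongr

/-- The set
`M' = {p ∈ Δ(ℤ≥0) : ∑_k p_k(μ_k V - Ck) ≥ 0, λ_k p_k ≥ μ_{k+1} p_{k+1} ∀k}` is
compact (in the topology of pointwise convergence of probability mass functions,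
which on tight sets coincides with the weak topology). -/
theorem Mprime_compact (lam μ : ℕ → ℝ) (V C M : ℝ)
    (hlamnn : ∀ k, 0 ≤ lam k) (hμnn : ∀ k, 0 ≤ μ k) (hμb : ∀ k, μ k ≤ M)
    (hμ0 : μ 0 = 0) (hV : 0 < V) (hC : 0 < C) :
    IsCompact {p : ℕ → ℝ |
      (∀ k, 0 ≤ p k) ∧ HasSum p 1 ∧
      Summable (fun k => p k * (μ k * V - C * k)) ∧
      0 ≤ ∑' k : ℕ, p k * (μ k * V - C * k) ∧
      ∀ k, μ (k + 1) * p (k + 1) ≤ lam k * p k} := by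
  have hM : (0:ℝ) ≤ M := le_trans (hμnn 0) (hμb 0)
  set S := {p : ℕ → ℝ |
      (∀ k, 0 ≤ p k) ∧ HasSum p 1 ∧
      Summable (fun k => p k * (μ k * V - C * k)) ∧
      0 ≤ ∑' k : ℕ, p k * (μ k * V - C * k) ∧
      ∀ k, μ (k + 1) * p (k + 1) ≤ lam k * p k} with hS
  -- uniform tail bound for members of S
  have htail : ∀ p ∈ S, ∀ N : ℕ, 1 ≤ N →
      (Summable fun k => p (k + N)) ∧ (∑' k : ℕ, p (k + N)) ≤ (M * V) / (C * N) := by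
    rintro p ⟨h1, h2, h3, h4, -⟩ N hN
    obtain ⟨hs, hb⟩ := moment_bound μ V C M hμnn hμb hV p h1 h2 h3 h4
    exact tail_bound C hC p h1 hs (M * V) hb N hN
  have hsub : S ⊆ Set.univ.pi fun _ : ℕ => Set.Icc (0:ℝ) 1 := by
    rintro p ⟨h1, h2, -, -, -⟩ k -
    exact ⟨h1 k, le_hasSum h2 k fun j _ => h1 j⟩
  refine IsCompact.of_isClosed_subset
    (isCompact_univ_pi fun _ => isCompact_Icc) ?_ hsub
  apply IsSeqClosed.isClosed
  intro q p hq hlim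
  have hptw : ∀ k, Tendsto (fun n => q n k) atTop (𝓝 (p k)) :=
    fun k => tendsto_pi_nhds.1 hlim k
  have h0seq : Tendsto (fun N : ℕ => (M * V) / (C * N)) atTop (𝓝 0) := by
    have := tendsto_const_div_atTop_nhds_zero_nat (M * V / C)
    simpa [div_div] using this
  -- nonnegativity of limit
  have hpnn : ∀ k, 0 ≤ p k := fun k =>
    ge_of_tendsto (hptw k) (Eventually.of_forall fun n => (hq n).1 k)
  -- partial sums of the approximants
  have hpsum : ∀ N : ℕ, Tendsto (fun n => ∑ k ∈ range N, q n k) atTop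
      (𝓝 (∑ k ∈ range N, p k)) :=
    fun N => tendsto_finset_sum _ fun k _ => hptw k
  have hub : ∀ N : ℕ, ∑ k ∈ range N, p k ≤ 1 := by
    intro N
    refine le_of_tendsto (hpsum N) (Eventually.of_forall fun n => ?_)
    exact sum_le_hasSum (range N) (fun i _ => (hq n).1 i) (hq n).2.1
  have hlb : ∀ N : ℕ, 1 ≤ N → 1 - (M * V) / (C * N) ≤ ∑ k ∈ range N, p k := by
    intro N hN
    refine ge_of_tendsto (hpsum N) (Eventually.of_forall fun n => ?_)
    obtain ⟨hts, htb⟩ := htail (q n) (hq n) N hN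
    have h := Summable.sum_add_tsum_nat_add (f := q n) N (hq n).2.1.summable
    rw [(hq n).2.1.tsum_eq] at h
    linarith
  -- p is a probability mass function
  have hpsble : Summable p := summable_of_sum_range_le hpnn hub
  have htsum1 : ∑' k, p k = 1 := by
    have hle1 : ∑' k, p k ≤ 1 := Summable.tsum_le_of_sum_range_le hpsble hub
    have hge1 : (1:ℝ) ≤ ∑' k, p k := by
      have hten1 : Tendsto (fun N : ℕ => 1 - (M * V) / (C * N)) atTop (𝓝 1) := by
        simpa using tendsto_const_nhds.sub h0seq
      refine le_of_tendsto hten1 ?_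
      filter_upwards [eventually_ge_atTop 1] with N hN
      exact le_trans (hlb N hN) (Summable.sum_le_tsum _ (fun i _ => hpnn i) hpsble)
    linarith
  have hpHasSum : HasSum p 1 := htsum1 ▸ hpsble.hasSum
  -- first moment series of p
  have hcknn : ∀ k : ℕ, (0:ℝ) ≤ C * k := fun k => by positivity
  have hpckub : ∀ N : ℕ, ∑ k ∈ range N, p k * (C * k) ≤ M * V := by
    intro N
    refine le_of_tendsto
      (tendsto_finset_sum _ fun k _ => (hptw k).mul_const _)
      (Eventually.of_forall fun n => ?_)
    obtain ⟨hmb1, hmb2⟩ := moment_bound μ V C M hμnn hμb hV (q n)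
      (hq n).1 (hq n).2.1 (hq n).2.2.1 (hq n).2.2.2.1
    exact le_trans (Summable.sum_le_tsum _ (fun i _ => mul_nonneg ((hq n).1 i) (hcknn i)) hmb1) hmb2
  have hpck : Summable fun k => p k * (C * k) :=
    summable_of_sum_range_le (fun k => mul_nonneg (hpnn k) (hcknn k)) hpckub
  have hg : Summable fun k => p k * (μ k * V) := by
    apply Summable.of_nonneg_of_le
      (fun k => mul_nonneg (hpnn k) (mul_nonneg (hμnn k) hV.le))
      (fun k => ?_) (hpsble.mul_left (M * V))
    nlinarith [mul_nonneg (mul_nonneg (hpnn k) (sub_nonneg.2 (hμb k))) hV.le]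
  have hfs : Summable fun k => p k * (μ k * V - C * k) :=
    (hg.sub hpck).congr fun k => by ring
  -- nonnegativity of the tsum
  have htsum0 : 0 ≤ ∑' k : ℕ, p k * (μ k * V - C * k) := by
    have key : ∀ N : ℕ, 1 ≤ N →
        -(M * V * ((M * V) / (C * N))) - (∑' k : ℕ, p (k + N) * (C * ((k + N : ℕ) : ℝ)))
          ≤ ∑' k : ℕ, p k * (μ k * V - C * k) := by
      intro N hN
      -- step 1: lower bound on the partial sum of f := p * (μ V - C k)
      have hA : -(M * V * ((M * V) / (C * N)))
          ≤ ∑ k ∈ range N, p k * (μ k * V - C * k) := by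
        refine ge_of_tendsto
          (tendsto_finset_sum _ fun k _ => (hptw k).mul_const _)
          (Eventually.of_forall fun n => ?_)
        obtain ⟨hn1, hn2, hn3, hn4, -⟩ := hq n
        obtain ⟨hts, htb⟩ := htail (q n) (hq n) N hN
        have hfsh : Summable fun k => q n (k + N) * (μ (k + N) * V - C * (k + N : ℕ)) :=
          (summable_nat_add_iff N).2 hn3
        have hgsh : Summable fun k => (M * V) * q n (k + N) := hts.mul_left _
        have hshle : (∑' k : ℕ, q n (k + N) * (μ (k + N) * V - C * (k + N : ℕ)))
            ≤ M * V * ((M * V) / (C * N)) := by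
          calc (∑' k : ℕ, q n (k + N) * (μ (k + N) * V - C * (k + N : ℕ)))
              ≤ ∑' k : ℕ, (M * V) * q n (k + N) := by
                refine Summable.tsum_le_tsum (fun k => ?_) hfsh hgsh
                nlinarith [mul_nonneg (mul_nonneg (hn1 (k + N)) (sub_nonneg.2 (hμb (k + N)))) hV.le,
                  mul_nonneg (hn1 (k + N)) (hcknn (k + N))]
            _ = (M * V) * ∑' k : ℕ, q n (k + N) := tsum_mul_left
            _ ≤ M * V * ((M * V) / (C * N)) := by
                have hMV : (0:ℝ) ≤ M * V := by positivity
                exact mul_le_mul_of_nonneg_left htb hMV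
        have h := Summable.sum_add_tsum_nat_add
          (f := fun k => q n k * (μ k * V - C * k)) N hn3
        linarith
      -- step 2: lower bound the tail of f for p
      have hfsh : Summable fun k => p (k + N) * (μ (k + N) * V - C * (k + N : ℕ)) :=
        (summable_nat_add_iff N).2 hfs
      have hcksh : Summable fun k => p (k + N) * (C * ((k + N : ℕ) : ℝ)) :=
        (summable_nat_add_iff N).2 hpck
      have hB : -(∑' k : ℕ, p (k + N) * (C * ((k + N : ℕ) : ℝ)))
          ≤ ∑' k : ℕ, p (k + N) * (μ (k + N) * V - C * (k + N : ℕ)) := by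
        rw [← tsum_neg]
        refine Summable.tsum_le_tsum (fun k => ?_) hcksh.neg hfsh
        nlinarith [mul_nonneg (mul_nonneg (hpnn (k + N)) (hμnn (k + N))) hV.le]
      have h := Summable.sum_add_tsum_nat_add
        (f := fun k => p k * (μ k * V - C * k)) N hfs
      linarith
    have hten : Tendsto (fun N : ℕ =>
        -(M * V * ((M * V) / (C * N))) - (∑' k : ℕ, p (k + N) * (C * ((k + N : ℕ) : ℝ))))
        atTop (𝓝 0) := by
      have t1 : Tendsto (fun N : ℕ => M * V * ((M * V) / (C * N))) atTop (𝓝 0) := by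
        simpa using h0seq.const_mul (M * V)
      have t2 : Tendsto (fun N : ℕ => ∑' k : ℕ, p (k + N) * (C * ((k + N : ℕ) : ℝ)))
          atTop (𝓝 0) := by
        simpa using tendsto_sum_nat_add (f := fun k => p k * (C * k))
      simpa using (t1.neg.sub t2)
    refine le_of_tendsto hten ?_
    filter_upwards [eventually_ge_atTop 1] with N hN using key N hN
  -- the monotonicity constraints pass to the limit
  refine ⟨hpnn, hpHasSum, hfs, htsum0, fun k => ?_⟩
  exact le_of_tendsto_of_tendsto' ((hptw (k + 1)).const_mul _) ((hptw k).const_mul _)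
    (fun n => (hq n).2.2.2.2 k)
end
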